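/- Let τ : Σ → Σ be a bijection with τ(Σ₂) = Σ₂, τ(w_{2k−1}) = w_{2k}, τ(w_{2k}) = w_{2k−1}, τ(t_{2k−1}) = t_{2k} and τ(t_{2k}) = t_{2k−1} for all 1 ≤ k ≤ 2^{ν−1}, and let T : G(Σ, e) → G(Σ, e) be the automorphism determined by T(Ψ_s) = Ψ_{τ(s)}. With u_i and v_i defined by u_{2k−1} := Ψ_{w_{2k−1}} − Ψ_w and u_{2k} := Ψ_{w_{2k−1}} + Ψ_{w_{2k}} − Ψ_w − Ψ_{w'} for 1 ≤ k ≤ 2^{ν−1} − 2, u_{2^ν−3} := Ψ_{w_{2^ν−3}} − Ψ_w, u_{2^ν−2} := Ψ_{w_{2^ν−3}} − Ψ_{w_{2^ν−2}}, v_{2k−1} := Ψ_{t_{2k−1}} − Ψ_{t_{2k}} for 1 ≤ k ≤ 2^{ν−1} and v_{2k} := Ψ_{t_{2k−1}} + Ψ_{t_{2k}} − Ψ_t − Ψ_{t'} for 1 ≤ k ≤ 2^{ν−1} − 1, one has: T(Ψ_w) = (1 + m)·Ψ_w + Σ_{i=1}^{2^{ν−1}−1} u_{2i}; T(u_{2k−1})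 = u_{2k−1} + u_{2k} and T(u_{2k}) = u_{2k} for 1 ≤ k ≤ 2^{ν−1} − 2; T(u_{2^ν−3}) = m·Ψ_w + u_{2^ν−3} + Σ_{i=1}^{2^{ν−1}−2} u_{2i}; T(u_{2^ν−2}) = u_{2^ν−2}; T(v_{2k−1}) = −v_{2k−1}; and T(v_{2k}) = v_{2k}. -/

import Mathlib

/-!
In `G(Σ, e)` every `e(s) • Ψ_s` equals the same class `c = 2 • Ψ_w`: so `Ψ_s = c` on `Σ₂`,
`3 • Ψ_{t_i} = c`, and the `Ψ_{w_i}` agree up to `2`-torsion. Tripling the relation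
`∑ Ψ_s = 0` turns it into `∑_i Ψ_{w_i} = -(6 s₂ + 4 · 2^ν) • Ψ_w`. Since `T` only swaps
`w_{2k-1} ↔ w_{2k}` and `t_{2k-1} ↔ t_{2k}`, each identity becomes, once the `u`'s and `v`'s are
expanded in the `Ψ`'s, a combination of this sum relation and of `2 • Ψ_{w_i} = 2 • Ψ_w`.
That `2^{ν-1}` is even is what lets the leftover multiple of `Ψ_{w'}` be traded for one of `Ψ_w`.
-/

/-- The subgroup of relations: `e s • ψ s - e t • ψ t` for all `s t`, together with
`∑ s, ψ s`. -/
noncomputable def relSub {S : Type*} [Fintype S] (e : S → ℤ) : AddSubgroup (S →₀ ℤ) :=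
  AddSubgroup.closure
    ({x | ∃ s t : S, x = Finsupp.single s (e s) - Finsupp.single t (e t)} ∪
      {∑ s : S, Finsupp.single s 1})

/-- `G(Σ, e)`: the quotient of the free abelian group on `Σ` by the relations. -/
abbrev CompGrp {S : Type*} [Fintype S] (e : S → ℤ) : Type _ :=
  (S →₀ ℤ) ⧸ relSub e

/-- `Ψ s`: the image of the basis element `ψ s` in `G(Σ, e)`. -/
noncomputable def Psi {S : Type*} [Fintype S] (e : S → ℤ) (s : S) : CompGrp e :=
  QuotientAddGroup.mk (Finsupp.single s 1)

/-- `Σ = Σ₂ ⊔ Σ₄ ⊔ Σ₆` with `#Σ₂ = s₂` and `#Σ₄ = #Σ₆ = 2^ν`. -/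
abbrev Sig4 (s₂ ν : ℕ) : Type := Fin s₂ ⊕ (Fin (2 ^ ν) ⊕ Fin (2 ^ ν))

/-- `e ≡ 1` on `Σ₂`, `e ≡ 2` on `Σ₄` and `e ≡ 3` on `Σ₆`. -/
def e4 (s₂ ν : ℕ) : Sig4 s₂ ν → ℤ :=
  Sum.elim (fun _ => 1) (Sum.elim (fun _ => 2) (fun _ => 3))

/-- `w i` (`1`-based): the `i`-th point of `Σ₄ = {w_1, …, w_{2^ν}}`. -/
def wPt4 (s₂ ν : ℕ) (i : ℕ) : Sig4 s₂ ν :=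
  Sum.inr (Sum.inl ⟨(i - 1) % 2 ^ ν, Nat.mod_lt _ (Nat.pow_pos (n := ν) (by norm_num))⟩)

/-- `t i` (`1`-based): the `i`-th point of `Σ₆ = {t_1, …, t_{2^ν}}`. -/
def tPt4 (s₂ ν : ℕ) (i : ℕ) : Sig4 s₂ ν :=
  Sum.inr (Sum.inr ⟨(i - 1) % 2 ^ ν, Nat.mod_lt _ (Nat.pow_pos (n := ν) (by norm_num))⟩)

/-- The generators `u_j` (`1`-based, `u_0 := Ψ w` with `w = w_{2^ν - 1}`):
for `1 ≤ k ≤ 2^{ν-1} - 2`, `u_{2k-1} = Ψ w_{2k-1} - Ψ w` and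
`u_{2k} = Ψ w_{2k-1} + Ψ w_{2k} - Ψ w - Ψ w'` (with `w' = w_{2^ν}`); and
`u_{2^ν-3} = Ψ w_{2^ν-3} - Ψ w` (the odd-index formula again),
`u_{2^ν-2} = Ψ w_{2^ν-3} - Ψ w_{2^ν-2}`. -/
noncomputable def uGen4 (s₂ ν : ℕ) : ℕ → CompGrp (e4 s₂ ν) := fun j =>
  if j = 0 then Psi (e4 s₂ ν) (wPt4 s₂ ν (2 ^ ν - 1))
  else if j = 2 ^ ν - 2 then
    Psi (e4 s₂ ν) (wPt4 s₂ ν (2 ^ ν - 3)) - Psi (e4 s₂ ν) (wPt4 s₂ ν (2 ^ ν - 2))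
  else if j % 2 = 1 then
    Psi (e4 s₂ ν) (wPt4 s₂ ν j) - Psi (e4 s₂ ν) (wPt4 s₂ ν (2 ^ ν - 1))
  else
    Psi (e4 s₂ ν) (wPt4 s₂ ν (j - 1)) + Psi (e4 s₂ ν) (wPt4 s₂ ν j)
      - Psi (e4 s₂ ν) (wPt4 s₂ ν (2 ^ ν - 1)) - Psi (e4 s₂ ν) (wPt4 s₂ ν (2 ^ ν))

/-- The generators `v_j` (`1`-based): `v_{2k-1} = Ψ t_{2k-1} - Ψ t_{2k}` for
`1 ≤ k ≤ 2^{ν-1}` and `v_{2k} = Ψ t_{2k-1} + Ψ t_{2k} - Ψ t - Ψ t'` for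
`1 ≤ k ≤ 2^{ν-1} - 1` (with `t = t_{2^ν - 1}`, `t' = t_{2^ν}`). -/
noncomputable def vGen4 (s₂ ν : ℕ) : ℕ → CompGrp (e4 s₂ ν) := fun j =>
  if j % 2 = 1 then
    Psi (e4 s₂ ν) (tPt4 s₂ ν j) - Psi (e4 s₂ ν) (tPt4 s₂ ν (j + 1))
  else
    Psi (e4 s₂ ν) (tPt4 s₂ ν (j - 1)) + Psi (e4 s₂ ν) (tPt4 s₂ ν j)
      - Psi (e4 s₂ ν) (tPt4 s₂ ν (2 ^ ν - 1)) - Psi (e4 s₂ ν) (tPt4 s₂ ν (2 ^ ν))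


section Relations

variable {S : Type*} [Fintype S] (e : S → ℤ)

theorem smul_Psi_eq_smul_Psi (s t : S) : e s • Psi e s = e t • Psi e t := by
  rw [Psi, Psi, ← QuotientAddGroup.mk_zsmul, ← QuotientAddGroup.mk_zsmul, QuotientAddGroup.eq]
  refine AddSubgroup.subset_closure (Or.inl ⟨t, s, ?_⟩)
  simp only [Finsupp.smul_single, smul_eq_mul, mul_one]
  abel

theorem sum_Psi_eq_zero : ∑ s, Psi e s = 0 := by
  have h : ∑ s, Finsupp.single s (1 : ℤ) ∈ relSub e := AddSubgroup.subset_closure (Or.inr rfl)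
  rw [← (QuotientAddGroup.eq_zero_iff _).mpr h]
  exact (map_sum (QuotientAddGroup.mk' (relSub e)) _ _).symm

end Relations

theorem sum_Icc_one_two_mul {M : Type*} [AddCommMonoid M] (f : ℕ → M) (n : ℕ) :
    ∑ i ∈ Finset.Icc 1 (2 * n), f i = ∑ k ∈ Finset.Icc 1 n, (f (2 * k - 1) + f (2 * k)) := by
  induction n with
  | zero => simp
  | succ n ih =>
    rw [Finset.sum_Icc_succ_top (by omega), ← ih, show 2 * (n + 1) = 2 * n + 1 + 1 by ring,
      Finset.sum_Icc_succ_top (by omega), Finset.sum_Icc_succ_top (by omega),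
      Nat.add_sub_cancel, add_assoc]

section Sig4

variable (s₂ ν : ℕ)

noncomputable def psiW (i : ℕ) : CompGrp (e4 s₂ ν) := Psi (e4 s₂ ν) (wPt4 s₂ ν i)

noncomputable def psiT (i : ℕ) : CompGrp (e4 s₂ ν) := Psi (e4 s₂ ν) (tPt4 s₂ ν i)

theorem two_smul_psiW (i j : ℕ) : (2 : ℤ) • psiW s₂ ν i = (2 : ℤ) • psiW s₂ ν j :=
  smul_Psi_eq_smul_Psi _ (wPt4 s₂ ν i) (wPt4 s₂ ν j)

theorem wPt4_one_add (x : Fin (2 ^ ν)) : wPt4 s₂ ν (1 + x) = Sum.inr (Sum.inl x) := by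
  simp only [wPt4, Nat.add_sub_cancel_left, Nat.mod_eq_of_lt x.isLt]

theorem sum_psiW (j : ℕ) :
    ∑ i ∈ Finset.Icc 1 (2 ^ ν), psiW s₂ ν i = -(6 * s₂ + 4 * 2 ^ ν : ℤ) • psiW s₂ ν j := by
  have h₂ (x : Fin s₂) : Psi (e4 s₂ ν) (Sum.inl x) = (2 : ℤ) • psiW s₂ ν j :=
    (one_smul ℤ _).symm.trans (smul_Psi_eq_smul_Psi _ (Sum.inl x) (wPt4 s₂ ν j))
  have h₄ (x : Fin (2 ^ ν)) :
      (2 : ℤ) • Psi (e4 s₂ ν) (Sum.inr (Sum.inl x)) = (2 : ℤ) • psiW s₂ ν j :=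
    smul_Psi_eq_smul_Psi _ (Sum.inr (Sum.inl x)) (wPt4 s₂ ν j)
  have h₆ (x : Fin (2 ^ ν)) :
      (3 : ℤ) • Psi (e4 s₂ ν) (Sum.inr (Sum.inr x)) = (2 : ℤ) • psiW s₂ ν j :=
    smul_Psi_eq_smul_Psi _ (Sum.inr (Sum.inr x)) (wPt4 s₂ ν j)
  have hS₂ : ∑ x : Fin s₂, Psi (e4 s₂ ν) (Sum.inl x) = s₂ • (2 : ℤ) • psiW s₂ ν j := by
    simp only [h₂, Finset.sum_const, Finset.card_univ, Fintype.card_fin]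
  have hS₄ : (2 : ℤ) • ∑ x : Fin (2 ^ ν), Psi (e4 s₂ ν) (Sum.inr (Sum.inl x))
      = 2 ^ ν • (2 : ℤ) • psiW s₂ ν j := by
    simp only [Finset.smul_sum, h₄, Finset.sum_const, Finset.card_univ, Fintype.card_fin]
  have hS₆ : (3 : ℤ) • ∑ x : Fin (2 ^ ν), Psi (e4 s₂ ν) (Sum.inr (Sum.inr x))
      = 2 ^ ν • (2 : ℤ) • psiW s₂ ν j := by
    simp only [Finset.smul_sum, h₆, Finset.sum_const, Finset.card_univ, Fintype.card_fin]
  have hIcc : ∑ x : Fin (2 ^ ν), Psi (e4 s₂ ν) (Sum.inr (Sum.inl x))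
      = ∑ i ∈ Finset.Icc 1 (2 ^ ν), psiW s₂ ν i := by
    rw [← Finset.Ico_add_one_right_eq_Icc, Finset.sum_Ico_eq_sum_range, Nat.add_sub_cancel,
      ← Fin.sum_univ_eq_sum_range]
    simp only [psiW, wPt4_one_add]
  have h₀ := sum_Psi_eq_zero (e4 s₂ ν)
  rw [Fintype.sum_sum_type, Fintype.sum_sum_type] at h₀
  linear_combination (norm := module) 3 • h₀ - hIcc - 3 • hS₂ - hS₄ - hS₆

end Sig4

section Generators

-- `n = 2^{ν-1} - 2`: the last two pairs are `(w_{2n+1}, w_{2n+2})` and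
-- `(w, w') = (w_{2n+3}, w_{2n+4})`.
variable {s₂ ν n : ℕ} (h : 2 ^ ν = 2 * (n + 2))
include h

theorem uGen4_zero_eq : uGen4 s₂ ν 0 = psiW s₂ ν (2 * (n + 2) - 1) := by
  rw [uGen4, if_pos rfl]
  simp only [psiW, h]

theorem uGen4_two_mul_sub_one_eq {k : ℕ} (hk : 1 ≤ k) :
    uGen4 s₂ ν (2 * k - 1) = psiW s₂ ν (2 * k - 1) - psiW s₂ ν (2 * (n + 2) - 1) := by
  rw [uGen4, if_neg (by omega), if_neg (by omega), if_pos (by omega)]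
  simp only [psiW, h]

theorem uGen4_two_mul_eq {k : ℕ} (hk₁ : 1 ≤ k) (hk₂ : k ≤ n) :
    uGen4 s₂ ν (2 * k) = psiW s₂ ν (2 * k - 1) + psiW s₂ ν (2 * k)
      - psiW s₂ ν (2 * (n + 2) - 1) - psiW s₂ ν (2 * (n + 2)) := by
  rw [uGen4, if_neg (by omega), if_neg (by omega), if_neg (by omega)]
  simp only [psiW, h]

theorem uGen4_two_mul_succ_eq :
    uGen4 s₂ ν (2 * (n + 1)) = psiW s₂ ν (2 * (n + 1) - 1) - psiW s₂ ν (2 * (n + 1)) := by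
  rw [uGen4, if_neg (by omega), if_pos (by omega)]
  simp only [psiW, h, show 2 * (n + 2) - 3 = 2 * (n + 1) - 1 by omega,
    show 2 * (n + 2) - 2 = 2 * (n + 1) by omega]

theorem vGen4_two_mul_eq (k : ℕ) :
    vGen4 s₂ ν (2 * k) = psiT s₂ ν (2 * k - 1) + psiT s₂ ν (2 * k)
      - psiT s₂ ν (2 * (n + 2) - 1) - psiT s₂ ν (2 * (n + 2)) := by
  rw [vGen4, if_neg (by omega)]
  simp only [psiT, h]

theorem sum_uGen4_two_mul (j : ℕ) :
    ∑ i ∈ Finset.Icc 1 n, uGen4 s₂ ν (2 * i)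
      = -(6 * s₂ + 4 * 2 ^ ν : ℤ) • psiW s₂ ν j
        - psiW s₂ ν (2 * (n + 1) - 1) - psiW s₂ ν (2 * (n + 1))
        - (n + 1) • (psiW s₂ ν (2 * (n + 2) - 1) + psiW s₂ ν (2 * (n + 2))) := by
  have hS := sum_psiW s₂ ν j
  rw [show Finset.Icc 1 (2 ^ ν) = Finset.Icc 1 (2 * (n + 2)) by rw [h], sum_Icc_one_two_mul,
    Finset.sum_Icc_succ_top (by omega), Finset.sum_Icc_succ_top (by omega)] at hS
  rw [Finset.sum_congr rfl fun k hk =>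
      uGen4_two_mul_eq h (Finset.mem_Icc.1 hk).1 (Finset.mem_Icc.1 hk).2]
  simp only [Finset.sum_sub_distrib, Finset.sum_const, Nat.card_Icc, Nat.add_sub_cancel]
  linear_combination (norm := module) hS

end Generators

def SwapsPairs {A : Type*} [AddCommGroup A] (T : A →+ A) (f : ℕ → A) (K : ℕ) : Prop :=
  ∀ k, 1 ≤ k → k ≤ K → T (f (2 * k - 1)) = f (2 * k) ∧ T (f (2 * k)) = f (2 * k - 1)

theorem SwapsPairs.of_Psi {S : Type*} [Fintype S] {e : S → ℤ} {τ : S → S}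
    {T : CompGrp e →+ CompGrp e} (hT : ∀ s, T (Psi e s) = Psi e (τ s)) {f : ℕ → S} {K : ℕ}
    (hτ : ∀ k, 1 ≤ k → k ≤ K → τ (f (2 * k - 1)) = f (2 * k) ∧ τ (f (2 * k)) = f (2 * k - 1)) :
    SwapsPairs T (fun i => Psi e (f i)) K := fun k hk₁ hk₂ => by
  simp only [hT, hτ k hk₁ hk₂, and_self]

section Action

variable {s₂ ν n : ℕ} (h : 2 ^ ν = 2 * (n + 2)) {T : CompGrp (e4 s₂ ν) →+ CompGrp (e4 s₂ ν)}
include h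

section
variable (hW : SwapsPairs T (psiW s₂ ν) (n + 2))
include hW

theorem map_uGen4_zero (hn : Even n) :
    T (uGen4 s₂ ν 0) = (1 + (6 * s₂ + 5 * 2 ^ ν)) • uGen4 s₂ ν 0 +
      ∑ i ∈ Finset.Icc 1 (n + 1), uGen4 s₂ ν (2 * i) := by
  obtain ⟨p, rfl⟩ := hn
  have h' : (2 : ℤ) ^ ν = 2 * (p + p + 2) := by exact_mod_cast h
  rw [Finset.sum_Icc_succ_top (by omega), sum_uGen4_two_mul h (2 * (p + p + 2) - 1),
    uGen4_two_mul_succ_eq h, uGen4_zero_eq h, (hW (p + p + 2) (by omega) le_rfl).1]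
  linear_combination (norm := module)
    ((p : ℤ) + 1) • two_smul_psiW s₂ ν (2 * (p + p + 2)) (2 * (p + p + 2) - 1)
      + two_smul_psiW s₂ ν (2 * (p + p + 1)) (2 * (p + p + 2) - 1)
      - h' • psiW s₂ ν (2 * (p + p + 2) - 1)

theorem map_uGen4_two_mul_sub_one {k : ℕ} (hk₁ : 1 ≤ k) (hk₂ : k ≤ n) :
    T (uGen4 s₂ ν (2 * k - 1)) = uGen4 s₂ ν (2 * k - 1) + uGen4 s₂ ν (2 * k) := by
  rw [uGen4_two_mul_sub_one_eq h hk₁, uGen4_two_mul_eq h hk₁ hk₂, map_sub,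
    (hW k hk₁ (by omega)).1, (hW (n + 2) (by omega) le_rfl).1]
  linear_combination (norm := module) two_smul_psiW s₂ ν (2 * (n + 2) - 1) (2 * k - 1)

theorem map_uGen4_two_mul {k : ℕ} (hk₁ : 1 ≤ k) (hk₂ : k ≤ n) :
    T (uGen4 s₂ ν (2 * k)) = uGen4 s₂ ν (2 * k) := by
  rw [uGen4_two_mul_eq h hk₁ hk₂, map_sub, map_sub, map_add, (hW k hk₁ (by omega)).1,
    (hW k hk₁ (by omega)).2, (hW (n + 2) (by omega) le_rfl).1, (hW (n + 2) (by omega) le_rfl).2]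
  abel

theorem map_uGen4_two_mul_succ_sub_one (hn : Even n) :
    T (uGen4 s₂ ν (2 * (n + 1) - 1)) = (6 * s₂ + 5 * 2 ^ ν) • uGen4 s₂ ν 0 +
      uGen4 s₂ ν (2 * (n + 1) - 1) + ∑ i ∈ Finset.Icc 1 n, uGen4 s₂ ν (2 * i) := by
  obtain ⟨p, rfl⟩ := hn
  have h' : (2 : ℤ) ^ ν = 2 * (p + p + 2) := by exact_mod_cast h
  rw [sum_uGen4_two_mul h (2 * (p + p + 2) - 1), uGen4_two_mul_sub_one_eq h (by omega),
    uGen4_zero_eq h, map_sub, (hW (p + p + 1) (by omega) (by omega)).1,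
    (hW (p + p + 2) (by omega) le_rfl).1]
  linear_combination (norm := module)
    two_smul_psiW s₂ ν (2 * (p + p + 1)) (2 * (p + p + 2) - 1)
      + (p : ℤ) • two_smul_psiW s₂ ν (2 * (p + p + 2)) (2 * (p + p + 2) - 1)
      - h' • psiW s₂ ν (2 * (p + p + 2) - 1)

theorem map_uGen4_two_mul_succ : T (uGen4 s₂ ν (2 * (n + 1))) = uGen4 s₂ ν (2 * (n + 1)) := by
  rw [uGen4_two_mul_succ_eq h, map_sub, (hW (n + 1) (by omega) (by omega)).1,
    (hW (n + 1) (by omega) (by omega)).2]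
  linear_combination (norm := module) two_smul_psiW s₂ ν (2 * (n + 1)) (2 * (n + 1) - 1)

end

theorem map_vGen4_two_mul (hT : SwapsPairs T (psiT s₂ ν) (n + 2)) {k : ℕ} (hk₁ : 1 ≤ k)
    (hk₂ : k ≤ n + 1) : T (vGen4 s₂ ν (2 * k)) = vGen4 s₂ ν (2 * k) := by
  rw [vGen4_two_mul_eq h, map_sub, map_sub, map_add, (hT k hk₁ (by omega)).1,
    (hT k hk₁ (by omega)).2, (hT (n + 2) (by omega) le_rfl).1, (hT (n + 2) (by omega) le_rfl).2]
  abel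

end Action

theorem map_vGen4_two_mul_sub_one {s₂ ν K : ℕ} {T : CompGrp (e4 s₂ ν) →+ CompGrp (e4 s₂ ν)}
    (hT : SwapsPairs T (psiT s₂ ν) K) {k : ℕ} (hk₁ : 1 ≤ k) (hk₂ : k ≤ K) :
    T (vGen4 s₂ ν (2 * k - 1)) = -vGen4 s₂ ν (2 * k - 1) := by
  have hv : vGen4 s₂ ν (2 * k - 1) = psiT s₂ ν (2 * k - 1) - psiT s₂ ν (2 * k) := by
    rw [vGen4, if_pos (by omega), show 2 * k - 1 + 1 = 2 * k by omega, psiT, psiT]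
  rw [hv, map_sub, (hT k hk₁ hk₂).1, (hT k hk₁ hk₂).2, neg_sub]

theorem stmt11_general (s₂ ν : ℕ) (hν : 2 ≤ ν)
    (τ : Sig4 s₂ ν ≃ Sig4 s₂ ν)
    (hτ4 : ∀ k : ℕ, 1 ≤ k → k ≤ 2 ^ (ν - 1) →
      τ (wPt4 s₂ ν (2 * k - 1)) = wPt4 s₂ ν (2 * k) ∧
      τ (wPt4 s₂ ν (2 * k)) = wPt4 s₂ ν (2 * k - 1))
    (hτ6 : ∀ k : ℕ, 1 ≤ k → k ≤ 2 ^ (ν - 1) →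
      τ (tPt4 s₂ ν (2 * k - 1)) = tPt4 s₂ ν (2 * k) ∧
      τ (tPt4 s₂ ν (2 * k)) = tPt4 s₂ ν (2 * k - 1))
    (T : CompGrp (e4 s₂ ν) →+ CompGrp (e4 s₂ ν))
    (hT : ∀ s : Sig4 s₂ ν, T (Psi (e4 s₂ ν) s) = Psi (e4 s₂ ν) (τ s)) :
    T (uGen4 s₂ ν 0) = (1 + (6 * s₂ + 5 * 2 ^ ν)) • uGen4 s₂ ν 0 +
      ∑ i ∈ Finset.Icc 1 (2 ^ (ν - 1) - 1), uGen4 s₂ ν (2 * i) ∧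
    (∀ k : ℕ, 1 ≤ k → k ≤ 2 ^ (ν - 1) - 2 →
      T (uGen4 s₂ ν (2 * k - 1)) = uGen4 s₂ ν (2 * k - 1) + uGen4 s₂ ν (2 * k) ∧
      T (uGen4 s₂ ν (2 * k)) = uGen4 s₂ ν (2 * k)) ∧
    T (uGen4 s₂ ν (2 ^ ν - 3)) = (6 * s₂ + 5 * 2 ^ ν) • uGen4 s₂ ν 0 +
      uGen4 s₂ ν (2 ^ ν - 3) +
      ∑ i ∈ Finset.Icc 1 (2 ^ (ν - 1) - 2), uGen4 s₂ ν (2 * i) ∧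
    T (uGen4 s₂ ν (2 ^ ν - 2)) = uGen4 s₂ ν (2 ^ ν - 2) ∧
    (∀ k : ℕ, 1 ≤ k → k ≤ 2 ^ (ν - 1) →
      T (vGen4 s₂ ν (2 * k - 1)) = -(vGen4 s₂ ν (2 * k - 1))) ∧
    (∀ k : ℕ, 1 ≤ k → k ≤ 2 ^ (ν - 1) - 1 →
      T (vGen4 s₂ ν (2 * k)) = vGen4 s₂ ν (2 * k)) := by
  obtain ⟨r, rfl⟩ : ∃ r, ν = r + 2 := ⟨ν - 2, by omega⟩
  obtain ⟨p, hp⟩ : ∃ p, 2 ^ r = p + 1 := ⟨2 ^ r - 1, by have := Nat.one_le_two_pow (n := r); omega⟩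
  have hK : 2 ^ (r + 2 - 1) = 2 * p + 2 := by
    rw [show r + 2 - 1 = r + 1 by omega, pow_succ, hp]; ring
  have hN : 2 ^ (r + 2) = 2 * (2 * p + 2) := by rw [pow_add, hp]; ring
  rw [hK] at hτ4 hτ6
  have hW : SwapsPairs T (psiW s₂ (r + 2)) (2 * p + 2) := SwapsPairs.of_Psi hT hτ4
  have hT' : SwapsPairs T (psiT s₂ (r + 2)) (2 * p + 2) := SwapsPairs.of_Psi hT hτ6
  rw [hK, show 2 * p + 2 - 1 = 2 * p + 1 by omega, show 2 * p + 2 - 2 = 2 * p by omega,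
    show 2 ^ (r + 2) - 3 = 2 * (2 * p + 1) - 1 by omega,
    show 2 ^ (r + 2) - 2 = 2 * (2 * p + 1) by omega]
  exact ⟨map_uGen4_zero hN hW (even_two_mul p),
    fun k hk₁ hk₂ => ⟨map_uGen4_two_mul_sub_one hN hW hk₁ hk₂, map_uGen4_two_mul hN hW hk₁ hk₂⟩,
    map_uGen4_two_mul_succ_sub_one hN hW (even_two_mul p), map_uGen4_two_mul_succ hN hW,
    fun k hk₁ hk₂ => map_vGen4_two_mul_sub_one hT' hk₁ hk₂,
    fun k hk₁ hk₂ => map_vGen4_two_mul hN hT' hk₁ hk₂⟩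

/-- if `τ : Σ ≃ Σ` preserves `Σ₂` and swaps `w_{2k-1} ↔ w_{2k}` and
`t_{2k-1} ↔ t_{2k}` for all `1 ≤ k ≤ 2^{ν-1}`, and `T` is the endomorphism of
`G(Σ, e)` determined by `T (Ψ s) = Ψ (τ s)`, then (with `m = 6s₂ + 5·2^ν`):
`T (Ψ w) = (1 + m) • Ψ w + ∑_{i=1}^{2^{ν-1}-1} u_{2i}`;
`T u_{2k-1} = u_{2k-1} + u_{2k}` and `T u_{2k} = u_{2k}` for `1 ≤ k ≤ 2^{ν-1} - 2`;
`T u_{2^ν-3} = m • Ψ w + u_{2^ν-3} + ∑_{i=1}^{2^{ν-1}-2} u_{2i}`;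
`T u_{2^ν-2} = u_{2^ν-2}`; `T v_{2k-1} = -v_{2k-1}` for `1 ≤ k ≤ 2^{ν-1}`; and
`T v_{2k} = v_{2k}` for `1 ≤ k ≤ 2^{ν-1} - 1`. -/
theorem stmt11 (s₂ ν : ℕ) (hν : 2 ≤ ν)
    (τ : Sig4 s₂ ν ≃ Sig4 s₂ ν)
    (hτ2 : ∀ x : Fin s₂, ∃ y : Fin s₂, τ (Sum.inl x) = Sum.inl y)
    (hτ4 : ∀ k : ℕ, 1 ≤ k → k ≤ 2 ^ (ν - 1) →
      τ (wPt4 s₂ ν (2 * k - 1)) = wPt4 s₂ ν (2 * k) ∧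
      τ (wPt4 s₂ ν (2 * k)) = wPt4 s₂ ν (2 * k - 1))
    (hτ6 : ∀ k : ℕ, 1 ≤ k → k ≤ 2 ^ (ν - 1) →
      τ (tPt4 s₂ ν (2 * k - 1)) = tPt4 s₂ ν (2 * k) ∧
      τ (tPt4 s₂ ν (2 * k)) = tPt4 s₂ ν (2 * k - 1))
    (T : CompGrp (e4 s₂ ν) →+ CompGrp (e4 s₂ ν))
    (hT : ∀ s : Sig4 s₂ ν, T (Psi (e4 s₂ ν) s) = Psi (e4 s₂ ν) (τ s)) :
    T (uGen4 s₂ ν 0) = (1 + (6 * s₂ + 5 * 2 ^ ν)) • uGen4 s₂ ν 0 +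
      ∑ i ∈ Finset.Icc 1 (2 ^ (ν - 1) - 1), uGen4 s₂ ν (2 * i) ∧
    (∀ k : ℕ, 1 ≤ k → k ≤ 2 ^ (ν - 1) - 2 →
      T (uGen4 s₂ ν (2 * k - 1)) = uGen4 s₂ ν (2 * k - 1) + uGen4 s₂ ν (2 * k) ∧
      T (uGen4 s₂ ν (2 * k)) = uGen4 s₂ ν (2 * k)) ∧
    T (uGen4 s₂ ν (2 ^ ν - 3)) = (6 * s₂ + 5 * 2 ^ ν) • uGen4 s₂ ν 0 +
      uGen4 s₂ ν (2 ^ ν - 3) +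
      ∑ i ∈ Finset.Icc 1 (2 ^ (ν - 1) - 2), uGen4 s₂ ν (2 * i) ∧
    T (uGen4 s₂ ν (2 ^ ν - 2)) = uGen4 s₂ ν (2 ^ ν - 2) ∧
    (∀ k : ℕ, 1 ≤ k → k ≤ 2 ^ (ν - 1) →
      T (vGen4 s₂ ν (2 * k - 1)) = -(vGen4 s₂ ν (2 * k - 1))) ∧
    (∀ k : ℕ, 1 ≤ k → k ≤ 2 ^ (ν - 1) - 1 →
      T (vGen4 s₂ ν (2 * k)) = vGen4 s₂ ν (2 * k)) :=
  stmt11_general s₂ ν hν τ hτ4 hτ6 T hT
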